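/- arXiv:1910.06481 — 2 statements merged into one kernel-verified Lean document; each statement's English description precedes it below -/
import Mathlib

section
/- For nonnegative integers 0 = p_0 < p_1 < ... < p_N, the N×N symmetric matrix with entries (A_0 - a_0 ⊗ a_0)_{ij} = 1/(p_i+p_j+1) - 1/((p_i+1)(p_j+1)) for 1 ≤ i,j ≤ N is positive definite. -/
set_option maxHeartbeats 1000000
open MeasureTheory intervalIntegral Polynomial Matrix

private noncomputable def gg (n : ℕ) : ℝ → ℝ := fun z => z ^ n - 1 / ((n : ℝ) + 1)

private lemma gg_cont (n : ℕ) : Continuous (gg n) := by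
  unfold gg; continuity

private lemma gg_integral (m n : ℕ) :
    ∫ z in (0:ℝ)..1, gg m z * gg n z
      = 1 / ((m : ℝ) + n + 1) - 1 / (((m : ℝ) + 1) * ((n : ℝ) + 1)) := by
  have hm : ((m : ℝ) + 1) ≠ 0 := by positivity
  have hn : ((n : ℝ) + 1) ≠ 0 := by positivity
  have hmn : ((m : ℝ) + n + 1) ≠ 0 := by positivity
  have hexp : ∀ z : ℝ, gg m z * gg n z
      = z ^ (m + n) - (1 / ((n : ℝ) + 1)) * z ^ m - (1 / ((m : ℝ) + 1)) * z ^ n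
        + (1 / (((m : ℝ) + 1) * ((n : ℝ) + 1))) := by
    intro z; unfold gg; rw [pow_add]; field_simp; ring
  have h1 : IntervalIntegrable (fun z : ℝ => z ^ (m + n)) volume 0 1 := by
    apply Continuous.intervalIntegrable; continuity
  have h2 : IntervalIntegrable (fun z : ℝ => (1 / ((n : ℝ) + 1)) * z ^ m) volume 0 1 := by
    apply Continuous.intervalIntegrable; continuity
  have h3 : IntervalIntegrable (fun z : ℝ => (1 / ((m : ℝ) + 1)) * z ^ n) volume 0 1 := by
    apply Continuous.intervalIntegrable; continuity
  have h4 : IntervalIntegrable (fun _ : ℝ => (1 / (((m : ℝ) + 1) * ((n : ℝ) + 1)))) volume 0 1 :=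
    intervalIntegrable_const
  calc ∫ z in (0:ℝ)..1, gg m z * gg n z
      = ∫ z in (0:ℝ)..1, (z ^ (m + n) - (1 / ((n : ℝ) + 1)) * z ^ m
          - (1 / ((m : ℝ) + 1)) * z ^ n + (1 / (((m : ℝ) + 1) * ((n : ℝ) + 1)))) := by
        simp_rw [hexp]
    _ = 1 / ((m : ℝ) + n + 1) - 1 / (((m : ℝ) + 1) * ((n : ℝ) + 1)) := by
        rw [intervalIntegral.integral_add (((h1.sub h2).sub h3)) h4,
          intervalIntegral.integral_sub (h1.sub h2) h3,
          intervalIntegral.integral_sub h1 h2,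
          intervalIntegral.integral_const_mul, intervalIntegral.integral_const_mul,
          integral_pow, integral_pow, integral_pow, intervalIntegral.integral_const]
        push_cast
        simp only [one_pow, zero_pow (Nat.succ_ne_zero _), sub_zero, smul_eq_mul, one_mul]
        field_simp
        ring

theorem stmt_0 (N : ℕ) (hN : 0 < N) (p : Fin N → ℕ)
    (hmono : StrictMono p) (hpos : ∀ i, 0 < p i) :
    Matrix.PosDef (Matrix.of fun i j : Fin N =>
      (1 / ((p i : ℝ) + (p j : ℝ) + 1) - 1 / (((p i : ℝ) + 1) * ((p j : ℝ) + 1)))) := by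
  refine Matrix.PosDef.of_dotProduct_mulVec_pos ?_ ?_
  · ext i j
    simp [Matrix.conjTranspose_apply]
    ring_nf
  · intro x hx
    set f : ℝ → ℝ := fun z => ∑ i, x i * gg (p i) z with hf
    have hggI : ∀ m n : ℕ, ∀ c : ℝ, IntervalIntegrable (fun z => c * (gg m z * gg n z)) volume 0 1 :=
      fun m n c => (continuous_const.mul ((gg_cont m).mul (gg_cont n))).intervalIntegrable 0 1
    have hfcont : Continuous f := by
      apply continuous_finset_sum; intro i _
      exact continuous_const.mul (gg_cont (p i))
    have key : ((star x) ⬝ᵥ (Matrix.of fun i j : Fin N =>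
        (1 / ((p i : ℝ) + (p j : ℝ) + 1) - 1 / (((p i : ℝ) + 1) * ((p j : ℝ) + 1)))).mulVec x)
        = ∫ z in (0:ℝ)..1, (f z) ^ 2 := by
      have hexp : ∀ z : ℝ, (f z) ^ 2 = ∑ i, ∑ j, (x i * x j) * (gg (p i) z * gg (p j) z) := by
        intro z
        rw [hf]; rw [sq, Finset.sum_mul_sum]
        exact Finset.sum_congr rfl fun i _ => Finset.sum_congr rfl fun j _ => by ring
      have inner : ∀ i : Fin N, (∫ z in (0:ℝ)..1, ∑ j, (x i * x j) * (gg (p i) z * gg (p j) z))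
          = ∑ j, x i * x j *
            (1 / ((p i : ℝ) + (p j : ℝ) + 1) - 1 / (((p i : ℝ) + 1) * ((p j : ℝ) + 1))) := by
        intro i
        rw [intervalIntegral.integral_finset_sum
          (f := fun j z => (x i * x j) * (gg (p i) z * gg (p j) z))
          (fun j _ => hggI (p i) (p j) (x i * x j))]
        refine Finset.sum_congr rfl fun j _ => ?_
        rw [intervalIntegral.integral_const_mul, gg_integral]
      calc (star x) ⬝ᵥ (Matrix.of fun i j : Fin N =>
            (1 / ((p i : ℝ) + (p j : ℝ) + 1)
              - 1 / (((p i : ℝ) + 1) * ((p j : ℝ) + 1)))).mulVec x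
          = ∑ i, ∑ j, x i * x j *
            (1 / ((p i : ℝ) + (p j : ℝ) + 1) - 1 / (((p i : ℝ) + 1) * ((p j : ℝ) + 1))) := by
            simp only [dotProduct, Matrix.mulVec, Matrix.of_apply, Pi.star_apply,
              star_trivial, Finset.mul_sum]
            exact Finset.sum_congr rfl fun i _ => Finset.sum_congr rfl fun j _ => by ring
        _ = ∑ i, ∫ z in (0:ℝ)..1, ∑ j, (x i * x j) * (gg (p i) z * gg (p j) z) := by
            exact (Finset.sum_congr rfl fun i _ => (inner i).symm)
        _ = ∫ z in (0:ℝ)..1, ∑ i, ∑ j, (x i * x j) * (gg (p i) z * gg (p j) z) :=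
            (intervalIntegral.integral_finset_sum
              (f := fun i z => ∑ j, (x i * x j) * (gg (p i) z * gg (p j) z))
              (fun i _ => (continuous_finset_sum Finset.univ fun j _ =>
                continuous_const.mul ((gg_cont (p i)).mul (gg_cont (p j)))).intervalIntegrable
                  0 1)).symm
        _ = ∫ z in (0:ℝ)..1, (f z) ^ 2 :=
            intervalIntegral.integral_congr fun z _ => (hexp z).symm
    rw [key]
    obtain ⟨i₀, hi₀⟩ : ∃ i, x i ≠ 0 := by
      by_contra h
      push_neg at h
      exact hx (funext h)
    set P : Polynomial ℝ := ∑ i, Polynomial.C (x i) *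
      (Polynomial.X ^ (p i) - Polynomial.C (1 / ((p i : ℝ) + 1))) with hP
    have hPeval : ∀ z : ℝ, P.eval z = f z := by
      intro z
      rw [hP, Polynomial.eval_finset_sum]
      simp [gg, hf]
    have hPne : P ≠ 0 := by
      intro h
      apply hi₀
      have hc := congrArg (fun q => Polynomial.coeff q (p i₀)) h
      simp only [hP, Polynomial.finset_sum_coeff, Polynomial.coeff_zero] at hc
      rw [Finset.sum_eq_single i₀] at hc
      · simpa [Polynomial.coeff_X_pow, Polynomial.coeff_C, (hpos i₀).ne'] using hc
      · intro j _ hji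
        have hne : p j ≠ p i₀ := fun h' => hji (hmono.injective h')
        simp [Polynomial.coeff_X_pow, Polynomial.coeff_C, Ne.symm hne, (hpos i₀).ne']
      · intro h; exact absurd (Finset.mem_univ i₀) h
    have hroots : {z : ℝ | P.IsRoot z}.Finite := Polynomial.finite_setOf_isRoot hPne
    rw [intervalIntegral.integral_pos_iff_support_of_nonneg_ae
      (Filter.Eventually.of_forall fun z => sq_nonneg (f z))
      ((hfcont.pow 2).intervalIntegrable 0 1)]
    refine ⟨one_pos, ?_⟩
    have hsub : Set.Ioc (0:ℝ) 1 ⊆ (Function.support (fun z => (f z) ^ 2) ∩ Set.Ioc 0 1)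
        ∪ {z : ℝ | P.IsRoot z} := by
      intro z hz
      by_cases hfz : f z = 0
      · right; simp [Polynomial.IsRoot, hPeval, hfz]
      · left
        refine ⟨?_, hz⟩
        simp [Function.mem_support, pow_eq_zero_iff, hfz]
    have hle := (measure_mono (μ := volume) hsub).trans (measure_union_le _ _)
    rw [hroots.measure_zero, add_zero] at hle
    simp only [Real.volume_Ioc, sub_zero, ENNReal.ofReal_one] at hle
    exact lt_of_lt_of_le zero_lt_one hle
end

section
/- The function u_2(x) = (1/8)(−6 − cosh(2x) + 15 sech²x − 15x sech²x tanh x) satisfies u'' = (4 − 12 sech²x)u for every real x, with u_2(0) = 1 and u_2'(0) = 0. -/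
noncomputable def vAux : ℝ → ℝ := fun x =>
  (1/8) * (-6 - Real.cosh (2*x) + 15/(Real.cosh x)^2
    - 15*x*Real.sinh x/(Real.cosh x)^3)

noncomputable def gAux : ℝ → ℝ := fun x =>
  (1/8) * (-2*Real.sinh (2*x) - 45*Real.sinh x/(Real.cosh x)^3
    + 45*x*(Real.sinh x)^2/(Real.cosh x)^4 - 15*x/(Real.cosh x)^2)

noncomputable def hAux : ℝ → ℝ := fun x =>
  (1/8) * (-4*Real.cosh (2*x) - 60/(Real.cosh x)^2
    + 180*(Real.sinh x)^2/(Real.cosh x)^4 + 120*x*Real.sinh x/(Real.cosh x)^3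
    - 180*x*(Real.sinh x)^3/(Real.cosh x)^5)

lemma coshne (x : ℝ) : Real.cosh x ≠ 0 := (Real.cosh_pos x).ne'

lemma hasDerivAt_vAux (x : ℝ) : HasDerivAt vAux (gAux x) x := by
  have hc := coshne x
  have h1 : HasDerivAt (fun y : ℝ => Real.cosh (2*y)) (Real.sinh (2*x) * (2*1)) x :=
    ((hasDerivAt_id x).const_mul 2).cosh
  have hc2 : HasDerivAt (fun y : ℝ => (Real.cosh y)^2)
      (2 * (Real.cosh x)^1 * Real.sinh x) x := (Real.hasDerivAt_cosh x).pow 2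
  have hc3 : HasDerivAt (fun y : ℝ => (Real.cosh y)^3)
      (3 * (Real.cosh x)^2 * Real.sinh x) x := (Real.hasDerivAt_cosh x).pow 3
  have h2 : HasDerivAt (fun y : ℝ => (15:ℝ)/(Real.cosh y)^2)
      ((0 * (Real.cosh x)^2 - 15 * (2 * (Real.cosh x)^1 * Real.sinh x)) / ((Real.cosh x)^2)^2) x :=
    (hasDerivAt_const x (15:ℝ)).div hc2 (pow_ne_zero 2 hc)
  have h3 : HasDerivAt (fun y : ℝ => y * Real.sinh y)
      (1 * Real.sinh x + x * Real.cosh x) x :=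
    (hasDerivAt_id x).mul (Real.hasDerivAt_sinh x)
  have h4 : HasDerivAt (fun y : ℝ => y * Real.sinh y / (Real.cosh y)^3)
      (((1 * Real.sinh x + x * Real.cosh x) * (Real.cosh x)^3
        - x * Real.sinh x * (3 * (Real.cosh x)^2 * Real.sinh x)) / ((Real.cosh x)^3)^2) x :=
    h3.div hc3 (pow_ne_zero 3 hc)
  have h5 := ((((hasDerivAt_const x (-6:ℝ)).sub h1).add h2).sub (h4.const_mul 15)).const_mul (1/8)
  convert h5 using 1
  · rfl
  · rfl
  · funext y; simp [vAux]; ring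
  · simp only [gAux]; field_simp; ring

lemma hasDerivAt_gAux (x : ℝ) : HasDerivAt gAux (hAux x) x := by
  have hc := coshne x
  have h1 : HasDerivAt (fun y : ℝ => Real.sinh (2*y)) (Real.cosh (2*x) * (2*1)) x :=
    ((hasDerivAt_id x).const_mul 2).sinh
  have hc2 : HasDerivAt (fun y : ℝ => (Real.cosh y)^2)
      (2 * (Real.cosh x)^1 * Real.sinh x) x := (Real.hasDerivAt_cosh x).pow 2
  have hc3 : HasDerivAt (fun y : ℝ => (Real.cosh y)^3)
      (3 * (Real.cosh x)^2 * Real.sinh x) x := (Real.hasDerivAt_cosh x).pow 3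
  have hc4 : HasDerivAt (fun y : ℝ => (Real.cosh y)^4)
      (4 * (Real.cosh x)^3 * Real.sinh x) x := (Real.hasDerivAt_cosh x).pow 4
  have h2 : HasDerivAt (fun y : ℝ => Real.sinh y / (Real.cosh y)^3)
      ((Real.cosh x * (Real.cosh x)^3 - Real.sinh x * (3 * (Real.cosh x)^2 * Real.sinh x))
        / ((Real.cosh x)^3)^2) x :=
    (Real.hasDerivAt_sinh x).div hc3 (pow_ne_zero 3 hc)
  have hs2 : HasDerivAt (fun y : ℝ => (Real.sinh y)^2)
      (2 * (Real.sinh x)^1 * Real.cosh x) x := (Real.hasDerivAt_sinh x).pow 2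
  have h3 : HasDerivAt (fun y : ℝ => y * (Real.sinh y)^2)
      (1 * (Real.sinh x)^2 + x * (2 * (Real.sinh x)^1 * Real.cosh x)) x :=
    (hasDerivAt_id x).mul hs2
  have h4 : HasDerivAt (fun y : ℝ => y * (Real.sinh y)^2 / (Real.cosh y)^4)
      (((1 * (Real.sinh x)^2 + x * (2 * (Real.sinh x)^1 * Real.cosh x)) * (Real.cosh x)^4
        - x * (Real.sinh x)^2 * (4 * (Real.cosh x)^3 * Real.sinh x)) / ((Real.cosh x)^4)^2) x :=
    h3.div hc4 (pow_ne_zero 4 hc)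
  have h5 : HasDerivAt (fun y : ℝ => y / (Real.cosh y)^2)
      ((1 * (Real.cosh x)^2 - x * (2 * (Real.cosh x)^1 * Real.sinh x)) / ((Real.cosh x)^2)^2) x :=
    (hasDerivAt_id x).div hc2 (pow_ne_zero 2 hc)
  have h6 := ((((h1.const_mul (-2)).sub (h2.const_mul 45)).add (h4.const_mul 45)).sub
    (h5.const_mul 15)).const_mul (1/8)
  convert h6 using 1
  · rfl
  · rfl
  · funext y; simp [gAux]; ring
  · simp only [hAux]; field_simp; ring

theorem stmt_6 :
    let u₂ : ℝ → ℝ := fun x => (1 / 8) * (-6 - Real.cosh (2 * x)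
      + 15 * (1 / Real.cosh x) ^ 2 - 15 * x * (1 / Real.cosh x) ^ 2 * Real.tanh x)
    (∀ x : ℝ, deriv (deriv u₂) x = (4 - 12 * (1 / Real.cosh x) ^ 2) * u₂ x)
    ∧ u₂ 0 = 1 ∧ deriv u₂ 0 = 0 := by
  intro u₂
  have hu : u₂ = vAux := by
    funext y
    have hc := coshne y
    simp only [u₂, vAux, Real.tanh_eq_sinh_div_cosh]
    field_simp
  have hderiv : deriv u₂ = gAux := by
    rw [hu]; funext y; exact (hasDerivAt_vAux y).deriv
  have hderiv2 : deriv (deriv u₂) = hAux := by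
    rw [hderiv]; funext y; exact (hasDerivAt_gAux y).deriv
  refine ⟨?_, ?_, ?_⟩
  · intro x
    rw [hderiv2, hu]
    have hc := coshne x
    have hs : Real.sinh x ^ 2 = Real.cosh x ^ 2 - 1 := by
      have := Real.cosh_sq_sub_sinh_sq x; linarith
    have hs3 : Real.sinh x ^ 3 = Real.sinh x * (Real.cosh x ^ 2 - 1) := by
      rw [← hs]; ring
    simp only [hAux, vAux, Real.cosh_two_mul]
    rw [hs3, hs]
    field_simp
    ring
  · rw [hu]; simp [vAux]; norm_num
  · rw [hderiv]; simp [gAux]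
end
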